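/- Let u be a polynomial of degree at most p on [-1,1], write u = Σ_{i=0}^{p} a_i L_i with Legendre polynomials L_i, and let π u = Σ_{i=0}^{p-1} a_i L_i be its L²-orthogonal projection onto polynomials of degree at most p−1. Then ∫_{-1}^{1} u'(ξ) · ξ · (u(ξ) − π u(ξ)) dξ = p · a_p² · ∫_{-1}^{1} L_p(ξ)² dξ ≥ 0. -/

import Mathlib

open Polynomial intervalIntegral

/-- The `i`-th Legendre polynomial on `[-1,1]`, via Rodrigues' formula. -/
noncomputable def legendre (i : ℕ) : Polynomial ℝ :=
  ((1 : ℝ) / (2 ^ i * i.factorial)) • (⇑(derivative (R := ℝ)))^[i] ((X ^ 2 - 1) ^ i)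

/-!
Since `u - πu = a_p L_p`, the integral is `a_p ∫ L_p · (ξ u')`. The leading coefficients of `ξ u'`
and `p u` agree, so `ξ u' = (ξ u' - p u) + p πu + p a_p L_p` with the first two summands of degree
`< p`; these are orthogonal to `L_p`, which leaves `p a_p² ∫ L_p²`.
-/

namespace Polynomial

theorem eval_iterate_derivative_pow_eq_zero {R : Type*} [CommSemiring R] {q : R[X]} {x : R}
    (hx : q.IsRoot x) {n j : ℕ} (hj : j < n) : (derivative^[j] (q ^ n)).eval x = 0 := by
  obtain ⟨g, hg⟩ := pow_sub_dvd_iterate_derivative_pow q n j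
  rw [hg, eval_mul, eval_pow, hx.eq_zero, zero_pow (by omega), zero_mul]

theorem degree_X_mul_derivative_sub_lt {R : Type*} [CommRing R] {q : R[X]} {n : ℕ}
    (hq : q.degree < ↑(n + 1)) : (X * derivative q - C (n : R) * q).degree < (n : WithBot ℕ) := by
  rw [degree_lt_iff_coeff_zero]
  intro m hm
  rcases m with _ | k
  · simp [show n = 0 by omega]
  · rw [coeff_sub, coeff_X_mul, coeff_derivative, coeff_C_mul]
    rcases hm.eq_or_lt with rfl | hlt
    · push_cast; ring
    · rw [coeff_eq_zero_of_degree_lt (hq.trans_le (by exact_mod_cast hlt)), zero_mul, mul_zero,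
        sub_zero]

theorem integral_eval_derivative_mul (P Q : ℝ[X]) (a b : ℝ) :
    ∫ x in a..b, (derivative P).eval x * Q.eval x =
      P.eval b * Q.eval b - P.eval a * Q.eval a -
        ∫ x in a..b, P.eval x * (derivative Q).eval x := by
  rw [integral_mul_deriv_eq_deriv_mul (fun x _ => P.hasDerivAt x) (fun x _ => Q.hasDerivAt x)
    ((derivative P).continuous.intervalIntegrable a b)
    ((derivative Q).continuous.intervalIntegrable a b)]
  ring

theorem integral_eval_iterate_derivative_mul {P : ℝ[X]} {a b : ℝ} {n : ℕ}
    (ha : ∀ j < n, (derivative^[j] P).eval a = 0) (hb : ∀ j < n, (derivative^[j] P).eval b = 0)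
    (Q : ℝ[X]) :
    ∫ x in a..b, (derivative^[n] P).eval x * Q.eval x =
      (-1) ^ n * ∫ x in a..b, P.eval x * (derivative^[n] Q).eval x := by
  induction n generalizing Q with
  | zero => simp
  | succ n ih =>
    rw [Function.iterate_succ_apply', integral_eval_derivative_mul, ha n n.lt_succ_self,
      hb n n.lt_succ_self, ih (fun j hj => ha j (hj.trans n.lt_succ_self))
        (fun j hj => hb j (hj.trans n.lt_succ_self)), Function.iterate_succ_apply]
    ring

end Polynomial

theorem natDegree_legendre_le (i : ℕ) : (legendre i).natDegree ≤ i := by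
  have hsq : ((X : ℝ[X]) ^ 2 - 1).natDegree ≤ 2 := by compute_degree
  calc (legendre i).natDegree
      ≤ (((X : ℝ[X]) ^ 2 - 1) ^ i).natDegree - i :=
        (natDegree_smul_le _ _).trans (natDegree_iterate_derivative _ _)
    _ ≤ 2 * i - i :=
        Nat.sub_le_sub_right ((natDegree_pow_le_of_le i hsq).trans_eq (mul_comm _ _)) i
    _ = i := by omega

theorem legendre_mem_degreeLT {i n : ℕ} (h : i < n) : legendre i ∈ degreeLT ℝ n :=
  mem_degreeLT.mpr <| (degree_le_of_natDegree_le (natDegree_legendre_le i)).trans_lt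
    (by exact_mod_cast h)

theorem degree_sum_C_mul_legendre_lt (a : ℕ → ℝ) (n : ℕ) :
    (∑ i ∈ Finset.range n, C (a i) * legendre i).degree < n := by
  rw [← mem_degreeLT]
  refine Submodule.sum_mem _ fun i hi => ?_
  rw [C_mul']
  exact Submodule.smul_mem _ _ (legendre_mem_degreeLT (Finset.mem_range.mp hi))

-- `n` integrations by parts in Rodrigues' formula; the boundary terms vanish because `±1` are
-- roots of `(X ^ 2 - 1) ^ n` of multiplicity `n`.
theorem integral_legendre_mul_eq_zero {n : ℕ} {q : ℝ[X]} (hq : q.degree < n) :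
    ∫ x in (-1 : ℝ)..1, (legendre n).eval x * q.eval x = 0 := by
  have hroot : ∀ x : ℝ, x ^ 2 = 1 → ((X : ℝ[X]) ^ 2 - 1).IsRoot x := fun x hx => by simp [hx]
  simp only [legendre, eval_smul, smul_eq_mul, mul_assoc]
  rw [integral_const_mul, integral_eval_iterate_derivative_mul
    (fun j hj => eval_iterate_derivative_pow_eq_zero (hroot _ (by norm_num)) hj)
    (fun j hj => eval_iterate_derivative_pow_eq_zero (hroot _ (by norm_num)) hj),
    iterate_derivative_eq_zero_of_degree_lt hq]
  simp

theorem projection_error_sign (p : ℕ) (a : ℕ → ℝ)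
    (u πu : Polynomial ℝ)
    (hu : u = ∑ i ∈ Finset.range (p + 1), Polynomial.C (a i) * legendre i)
    (hπu : πu = ∑ i ∈ Finset.range p, Polynomial.C (a i) * legendre i) :
    (∫ ξ in (-1 : ℝ)..1, (derivative u).eval ξ * ξ * (u.eval ξ - πu.eval ξ))
        = (p : ℝ) * a p ^ 2 * ∫ ξ in (-1 : ℝ)..1, (legendre p).eval ξ ^ 2 ∧
      0 ≤ (p : ℝ) * a p ^ 2 * ∫ ξ in (-1 : ℝ)..1, (legendre p).eval ξ ^ 2 := by
  set L := legendre p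
  have hπu_deg : πu.degree < p := hπu ▸ degree_sum_C_mul_legendre_lt a p
  have hu_deg : u.degree < ↑(p + 1) := hu ▸ degree_sum_C_mul_legendre_lt a (p + 1)
  have herror : ∀ ξ, u.eval ξ - πu.eval ξ = a p * L.eval ξ := fun ξ => by
    simp [hu, hπu, Finset.sum_range_succ, L]
  refine ⟨?_, mul_nonneg (by positivity) (integral_nonneg (by norm_num) fun _ _ => sq_nonneg _)⟩
  calc _ = ∫ ξ in (-1 : ℝ)..1, a p * (L.eval ξ * (X * derivative u - C (p : ℝ) * u).eval ξ)
          + p * a p * (L.eval ξ * πu.eval ξ) + p * a p ^ 2 * L.eval ξ ^ 2 :=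
        integral_congr fun ξ _ => by
          simp only [eval_sub, eval_mul, eval_X, eval_C]
          linear_combination ((derivative u).eval ξ * ξ + p * a p * L.eval ξ) * herror ξ
    _ = a p * (∫ ξ in (-1 : ℝ)..1, L.eval ξ * (X * derivative u - C (p : ℝ) * u).eval ξ)
          + p * a p * (∫ ξ in (-1 : ℝ)..1, L.eval ξ * πu.eval ξ)
          + p * a p ^ 2 * ∫ ξ in (-1 : ℝ)..1, L.eval ξ ^ 2 := by
        rw [integral_add, integral_add, integral_const_mul, integral_const_mul, integral_const_mul]
        all_goals exact Continuous.intervalIntegrable (by fun_prop) _ _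
    _ = _ := by
        rw [integral_legendre_mul_eq_zero (degree_X_mul_derivative_sub_lt hu_deg),
          integral_legendre_mul_eq_zero hπu_deg]
        ring
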